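/- arXiv:2309.06025 — 2 statements merged into one kernel-verified Lean document; each statement's English description precedes it below -/
import Mathlib

section
/- Let f₁, ..., fₙ : ℝ → ℝ be smooth with fₙ' nowhere zero, and consider the separable hypersurface M = {x ∈ ℝⁿ : f₁(x₁) + ... + fₙ(xₙ) = 0}. For indices 1 ≤ i < j ≤ n−1, the sectional curvature of the plane spanned by the tangent vectors Xᵢ = ∂/∂xᵢ − (fᵢ'/fₙ')∂/∂xₙ and Xⱼ = ∂/∂xⱼ − (fⱼ'/fₙ')∂/∂xₙ equals (fᵢ'² fⱼ'' fₙ'' + fⱼ'² fᵢ'' fₙ'' + fₙ'² fᵢ'' fⱼ'') / ((Σₖ fₖ'²)·(fᵢ'² + fⱼ'² + fₙ'²)). -/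
/-- Sectional curvature of a separable hypersurface `f₁(x₁) + ⋯ + fₙ(xₙ) = 0` (with
`fₙ' ≠ 0`) on the plane spanned by the tangent vectors
`Xᵢ = ∂/∂xᵢ − (fᵢ'/fₙ')∂/∂xₙ` and `Xⱼ`, computed by the Gauss equation with second
fundamental form `II(v,w) = (∑ₖ fₖ'' vₖ wₖ)/‖∇F‖` and first fundamental form
`g(v,w) = ⟨v,w⟩`, equals
`(fᵢ'²fⱼ''fₙ'' + fⱼ'²fᵢ''fₙ'' + fₙ'²fᵢ''fⱼ'')/((∑ₖ fₖ'²)(fᵢ'² + fⱼ'² + fₙ'²))`. -/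
theorem stmt_6 {n : ℕ} (hn : 3 ≤ n) (f : Fin n → ℝ → ℝ)
    (hf : ∀ k, ContDiff ℝ (⊤ : ℕ∞) (f k)) (x : Fin n → ℝ)
    (hx : (∑ k, f k (x k)) = 0)
    (i j : Fin n) (hij : (i : ℕ) < j) (hj : (j : ℕ) < n - 1)
    (hfn : deriv (f ⟨n - 1, by omega⟩) (x ⟨n - 1, by omega⟩) ≠ 0) :
    let last : Fin n := ⟨n - 1, by omega⟩
    let a : Fin n → ℝ := fun k => deriv (f k) (x k)
    let c : Fin n → ℝ := fun k => deriv (deriv (f k)) (x k)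
    let X : Fin n → Fin n → ℝ := fun m k =>
      if k = m then 1 else if k = last then -(a m / a last) else 0
    let II : (Fin n → ℝ) → (Fin n → ℝ) → ℝ := fun v w =>
      (∑ k, c k * v k * w k) / Real.sqrt (∑ k, (a k) ^ 2)
    let g : (Fin n → ℝ) → (Fin n → ℝ) → ℝ := fun v w => ∑ k, v k * w k
    (II (X i) (X i) * II (X j) (X j) - (II (X i) (X j)) ^ 2) /
        (g (X i) (X i) * g (X j) (X j) - (g (X i) (X j)) ^ 2) =
      ((a i) ^ 2 * c j * c last + (a j) ^ 2 * c i * c last + (a last) ^ 2 * c i * c j) /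
        ((∑ k, (a k) ^ 2) * ((a i) ^ 2 + (a j) ^ 2 + (a last) ^ 2)) := by
  intro last a c X II g
  have hil : i ≠ last := Fin.ne_of_val_ne (by simp [last]; omega)
  have hjl : j ≠ last := Fin.ne_of_val_ne (by simp [last]; omega)
  have hijne : i ≠ j := Fin.ne_of_val_ne (by omega)
  have hal : a last ≠ 0 := hfn
  have hsum2 : ∀ (d : Fin n → ℝ) (m : Fin n), m ≠ last →
      ∑ k, d k * X m k * X m k = d m + d last * (a m / a last) ^ 2 := by
    intro d m hm
    rw [Fintype.sum_eq_add m last hm (fun k hk => by simp [X, hk.1, hk.2])]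
    simp [X, hm, Ne.symm hm]
    ring
  have hsum1 : ∀ (d : Fin n → ℝ) (m m' : Fin n), m ≠ last → m' ≠ last → m ≠ m' →
      ∑ k, d k * X m k * X m' k = d last * (a m / a last) * (a m' / a last) := by
    intro d m m' hm hm' hmm
    rw [Fintype.sum_eq_single last (fun k hk => ?_)]
    · simp [X, Ne.symm hm, Ne.symm hm']
    · simp only [X]
      by_cases h1 : k = m <;> by_cases h2 : k = m' <;> simp_all
  have hgen : ∀ m m' : Fin n, (∑ k, X m k * X m' k) = ∑ k, (fun _ => (1:ℝ)) k * X m k * X m' k := by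
    intro m m'; simp
  have hS : 0 < ∑ k, (a k) ^ 2 := by
    have h1 : (a last) ^ 2 ≤ ∑ k, (a k) ^ 2 :=
      Finset.single_le_sum (fun k _ => sq_nonneg (a k)) (Finset.mem_univ last)
    have h2 : 0 < (a last) ^ 2 := by positivity
    linarith
  simp only [II, g]
  rw [hsum2 c i hil, hsum2 c j hjl, hsum1 c i j hil hjl hijne,
    hgen i i, hgen j j, hgen i j,
    hsum2 (fun _ => 1) i hil, hsum2 (fun _ => 1) j hjl, hsum1 (fun _ => 1) i j hil hjl hijne]
  set t := Real.sqrt (∑ k, (a k) ^ 2) with htdef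
  have ht2 : t ^ 2 = ∑ k, (a k) ^ 2 := Real.sq_sqrt hS.le
  have ht : t ≠ 0 := by positivity
  rw [show (∑ k, (a k) ^ 2) = t ^ 2 from ht2.symm]
  have hden : (1 + (a i / a last) ^ 2) * (1 + (a j / a last) ^ 2) -
      (1 * (a i / a last) * (a j / a last)) ^ 2 ≠ 0 := by
    have he : (1 + (a i / a last) ^ 2) * (1 + (a j / a last) ^ 2) -
        (1 * (a i / a last) * (a j / a last)) ^ 2 =
        1 + (a i / a last) ^ 2 + (a j / a last) ^ 2 := by ring
    rw [he]; positivity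
  have h3 : (a i) ^ 2 + (a j) ^ 2 + (a last) ^ 2 ≠ 0 := by positivity
  field_simp [h3]
  have hD : a last ^ 14 * a i ^ 2 * t ^ 4 + a last ^ 14 * a j ^ 2 * t ^ 4 + a last ^ 16 * t ^ 4 ≠ 0 := by
    have he : a last ^ 14 * a i ^ 2 * t ^ 4 + a last ^ 14 * a j ^ 2 * t ^ 4 + a last ^ 16 * t ^ 4 =
        a last ^ 14 * t ^ 4 * ((a i) ^ 2 + (a j) ^ 2 + (a last) ^ 2) := by ring
    rw [he]; positivity
  have hD2 : a last ^ 2 * t * (a last ^ 2 * t) * (a last * a last * t) ^ 2 *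
        ((a last ^ 2 + a i ^ 2) * (a last ^ 2 + a j ^ 2) * (a last * a last) ^ 2 -
          a last ^ 2 * a last ^ 2 * (a i * a j) ^ 2) ≠ 0 := by
    have he : a last ^ 2 * t * (a last ^ 2 * t) * (a last * a last * t) ^ 2 *
        ((a last ^ 2 + a i ^ 2) * (a last ^ 2 + a j ^ 2) * (a last * a last) ^ 2 -
          a last ^ 2 * a last ^ 2 * (a i * a j) ^ 2) =
        a last ^ 14 * t ^ 4 * ((a last) ^ 2 + (a i) ^ 2 + (a j) ^ 2) := by ring
    rw [he]; positivity
  rw [div_eq_iff (by rw [show (a last ^ 2 + a i ^ 2) * (a last ^ 2 + a j ^ 2) - a i ^ 2 * a j ^ 2 = a last ^ 2 * (a last ^ 2 + a i ^ 2 + a j ^ 2) by ring]; positivity)]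
  ring
end

section
/- Let n > 3, K₀ ≠ 0, and let X₁, ..., Xₙ be smooth nowhere-zero functions of single variables u₁, ..., uₙ satisfying K₀(Xᵢ + Xⱼ + Xₙ)(Σₖ Xₖ) = XᵢXⱼ'Xₙ' + XⱼXᵢ'Xₙ' + XₙXᵢ'Xⱼ' for all 1 ≤ i < j ≤ n−1 on the hyperplane u₁+...+uₙ=0. Then none of X₁', ..., Xₙ' vanishes (Lemma: if some Xₖ' ≡ 0, a contradiction arises). -/
/-- Lemma 3 (lemma-K0-1): if smooth positive functions `X₁, …, Xₙ` of one variable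
(n > 3) satisfy `K₀(Xᵢ + Xⱼ + Xₙ)(∑ₖ Xₖ) = XᵢXⱼ'Xₙ' + XⱼXᵢ'Xₙ' + XₙXᵢ'Xⱼ'` for all
`1 ≤ i < j ≤ n−1` on the hyperplane `u₁ + ⋯ + uₙ = 0`, with `K₀ ≠ 0`, then none of
`X₁', …, Xₙ'` vanishes identically. -/
theorem stmt_10 {n : ℕ} (hn : 3 < n) (K₀ : ℝ) (hK₀ : K₀ ≠ 0)
    (X : Fin n → ℝ → ℝ) (hX : ∀ k, ContDiff ℝ (⊤ : ℕ∞) (X k))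
    (hpos : ∀ k t, 0 < X k t)
    (heq : ∀ u : Fin n → ℝ, (∑ k, u k) = 0 →
      ∀ i j : Fin n, (i : ℕ) < j → (j : ℕ) < n - 1 →
        K₀ * (X i (u i) + X j (u j) + X ⟨n - 1, by omega⟩ (u ⟨n - 1, by omega⟩)) *
            (∑ k, X k (u k)) =
          X i (u i) * deriv (X j) (u j) * deriv (X ⟨n - 1, by omega⟩) (u ⟨n - 1, by omega⟩) +
          X j (u j) * deriv (X i) (u i) * deriv (X ⟨n - 1, by omega⟩) (u ⟨n - 1, by omega⟩) +
          X ⟨n - 1, by omega⟩ (u ⟨n - 1, by omega⟩) * deriv (X i) (u i) * deriv (X j) (u j)) :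
    ∀ k : Fin n, ¬ (∀ t : ℝ, deriv (X k) t = 0) := by
  intro m hm
  have hN' : n - 1 < n := by omega
  set N : Fin n := ⟨n - 1, hN'⟩ with hNdef
  have heq' : ∀ u : Fin n → ℝ, (∑ k, u k) = 0 →
      ∀ i j : Fin n, (i : ℕ) < j → (j : ℕ) < n - 1 →
        K₀ * (X i (u i) + X j (u j) + X N (u N)) * (∑ k, X k (u k)) =
          X i (u i) * deriv (X j) (u j) * deriv (X N) (u N) +
          X j (u j) * deriv (X i) (u i) * deriv (X N) (u N) +
          X N (u N) * deriv (X i) (u i) * deriv (X j) (u j) := heq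
  have hconst : ∀ c : Fin n, (∀ t, deriv (X c) t = 0) → ∀ s t, X c s = X c t :=
    fun c h s t => is_const_of_deriv_eq_zero ((hX c).differentiable (by simp)) h s t
  set i0 : Fin n := ⟨0, by omega⟩ with hi0
  set i1 : Fin n := ⟨1, by omega⟩ with hi1
  set i2 : Fin n := ⟨2, by omega⟩ with hi2
  have hSpos : ∀ u : Fin n → ℝ, 0 < ∑ k, X k (u k) := fun u =>
    Finset.sum_pos (fun k _ => hpos k (u k)) ⟨i0, Finset.mem_univ _⟩
  -- Propagation: if X c has identically zero derivative, so does any X p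
  -- with p not one of the special indices i, j, N and p ≠ c.
  have prop : ∀ i j p c : Fin n, (i : ℕ) < j → (j : ℕ) < n - 1 →
      p ≠ i → p ≠ j → p ≠ N → p ≠ c → (∀ t, deriv (X c) t = 0) →
      ∀ t, deriv (X p) t = 0 := by
    intro i j p c hij hjn hpi hpj hpN hpc hc
    suffices hcst : ∀ t, X p t = X p 0 by
      intro t
      have hXp : X p = fun _ => X p 0 := funext hcst
      rw [hXp]
      exact deriv_const _ _
    intro t
    set u : Fin n → ℝ := fun k => if k = p then t else if k = c then -t else 0 with hu
    have hsum : ∑ k, u k = 0 := by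
      have huk : ∀ k, u k = (if k = p then t else 0) + (if k = c then -t else 0) := by
        intro k
        by_cases h1 : k = p
        · subst h1; simp [hu, hpc]
        · by_cases h2 : k = c <;> simp [hu, h1, h2, Ne.symm hpc]
      rw [Finset.sum_congr rfl (fun k _ => huk k), Finset.sum_add_distrib]
      simp [Finset.sum_ite_eq']
    have hval : ∀ k : Fin n, k ≠ p → X k (u k) = X k 0 := by
      intro k hk
      by_cases h2 : k = c
      · subst h2; simp only [hu, if_neg hk, if_pos rfl]; exact hconst k hc _ _
      · simp [hu, hk, h2]
    have hder : ∀ k : Fin n, k ≠ p → deriv (X k) (u k) = deriv (X k) 0 := by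
      intro k hk
      by_cases h2 : k = c
      · subst h2; rw [hc, hc]
      · simp [hu, hk, h2]
    have hup : u p = t := by simp [hu]
    have hsX : ∑ k, X k (u k) = (∑ k, X k 0) + (X p t - X p 0) := by
      have hterm : ∀ k : Fin n, X k (u k) = X k 0 + (if k = p then X p t - X p 0 else 0) := by
        intro k
        by_cases hk : k = p
        · subst hk; rw [hup]; simp
        · rw [hval k hk]; simp [hk]
      rw [Finset.sum_congr rfl (fun k _ => hterm k), Finset.sum_add_distrib]
      simp [Finset.sum_ite_eq']
    have h1 := heq' u hsum i j hij hjn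
    have h0 := heq' (fun _ => 0) (by simp) i j hij hjn
    rw [hval i hpi.symm, hval j hpj.symm, hval N hpN.symm, hder i hpi.symm, hder j hpj.symm,
      hder N hpN.symm, hsX] at h1
    have key : K₀ * (X i 0 + X j 0 + X N 0) * (X p t - X p 0) = 0 := by
      linear_combination h1 - h0
    have hA : (0 : ℝ) < X i 0 + X j 0 + X N 0 := by
      have := hpos i 0; have := hpos j 0; have := hpos N 0; linarith
    have hKA : K₀ * (X i 0 + X j 0 + X N 0) ≠ 0 := mul_ne_zero hK₀ hA.ne'
    have hdz : X p t - X p 0 = 0 := by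
      rcases mul_eq_zero.mp key with h | h
      · exact absurd h hKA
      · exact h
    linarith
  -- basic index facts
  have h01 : (i0 : ℕ) < (i1 : ℕ) := by simp [hi0, hi1]
  have h02 : (i0 : ℕ) < (i2 : ℕ) := by simp [hi0, hi2]
  have h12 : (i1 : ℕ) < (i2 : ℕ) := by simp [hi1, hi2]
  have h1n : (i1 : ℕ) < n - 1 := by simp [hi1]; omega
  have h2n : (i2 : ℕ) < n - 1 := by simp [hi2]; omega
  have hne10 : i1 ≠ i0 := by simp [Fin.ext_iff, hi0, hi1]
  have hne12 : i1 ≠ i2 := by simp [Fin.ext_iff, hi1, hi2]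
  have hne20 : i2 ≠ i0 := by simp [Fin.ext_iff, hi0, hi2]
  have hne21 : i2 ≠ i1 := by simp [Fin.ext_iff, hi1, hi2]
  have hne1N : i1 ≠ N := by simp [Fin.ext_iff, hi1, hNdef]; omega
  have hne2N : i2 ≠ N := by simp [Fin.ext_iff, hi2, hNdef]; omega
  -- Step 1: X i2 has identically zero derivative.
  have hc2 : ∀ t, deriv (X i2) t = 0 := by
    by_cases hm2 : m = i2
    · rw [← hm2]; exact hm
    · exact prop i0 i1 i2 m h01 h1n hne20 hne21 hne2N (Ne.symm hm2) hm
  -- Step 2: X i1 has identically zero derivative.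
  have hc1 : ∀ t, deriv (X i1) t = 0 :=
    prop i0 i2 i1 i2 h02 h2n hne10 hne12 hne1N hne12 hc2
  -- Final contradiction from the equation at u = 0 with (i, j) = (i1, i2).
  have h0 := heq' (fun _ => 0) (by simp) i1 i2 h12 h2n
  rw [hc1 0, hc2 0] at h0
  have hA : (0 : ℝ) < X i1 0 + X i2 0 + X N 0 := by
    have := hpos i1 0; have := hpos i2 0; have := hpos N 0; linarith
  have hS := hSpos (fun _ => 0)
  have : K₀ * (X i1 0 + X i2 0 + X N 0) * (∑ k, X k 0) ≠ 0 :=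
    mul_ne_zero (mul_ne_zero hK₀ hA.ne') hS.ne'
  apply this
  rw [h0]; ring
end
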